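/- Let 𝒞 ⊆ 𝔞 be a nonempty finitely generated convex set with asymptotic cone C, and let 𝔟 ⊆ 𝔞 be a linear subspace such that dim(C∨ + 𝔟) = dim 𝔞. Let ξ ∈ 𝔟⊥ be such that ξ ∈ p⊥(C∨), and assume ξ is in general position in the following sense: for every face F of 𝒞 such that the dimension of the linear span of p⊥(𝔞_F^+) is strictly smaller than dim 𝔟⊥, one has ξ ∉ p⊥(𝔞_F^+). Then for every pair of faces F₁, F₂ ∈ ℱ(𝒞,ξ), one has p(F₁) ∩ p(F₂) = p(F₁ ∩ F₂). -/

import Mathlib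

open Pointwise

variable {E : Type*} [NormedAddCommGroup E] [InnerProductSpace ℝ E] [FiniteDimensional ℝ E]

/-- A finitely generated convex set: a finite intersection of closed half-spaces. -/
def IsFGConvex (C : Set E) : Prop :=
  ∃ s : Finset (E × ℝ), C = {X | ∀ p ∈ s, (inner ℝ p.1 X : ℝ) ≤ p.2}

/-- The tangent cone `T_C(H) = ℝ≥0 · (C - H)`. -/
def tangCone (C : Set E) (H : E) : Set E :=
  {X | ∃ t : ℝ, 0 ≤ t ∧ ∃ c ∈ C, X = t • (c - H)}

/-- The normal cone `N_C(H) = {Y | (Y,X) ≤ 0 for all X ∈ T_C(H)}`. -/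
def normCone (C : Set E) (H : E) : Set E :=
  {Y | ∀ X ∈ tangCone C H, (inner ℝ Y X : ℝ) ≤ 0}

/-- The asymptotic cone of `C`: the set of `X` with `C + ℝ≥0 · X = C`. -/
def asympCone (C : Set E) : Set E :=
  {X | C + {Y | ∃ t : ℝ, 0 ≤ t ∧ Y = t • X} = C}

/-- The dual cone `C∨ = {Y | (Y,X) ≤ 0 for all X ∈ C}`. -/
def polarCone (C : Set E) : Set E :=
  {Y | ∀ X ∈ C, (inner ℝ Y X : ℝ) ≤ 0}

/-- A face of `C`: the (nonempty) intersection of `C` with a supporting affine hyperplane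
`{H | (λ,H) = c}`, where `(λ,H) ≤ c` on all of `C` (the case `λ = 0` being allowed). -/
def IsFace (C F : Set E) : Prop :=
  F.Nonempty ∧ ∃ (lam : E) (c : ℝ), (∀ H ∈ C, (inner ℝ lam H : ℝ) ≤ c) ∧
    F = {H | H ∈ C ∧ (inner ℝ lam H : ℝ) = c}

/-- `𝔞_F^+`: the relative interior of the normal cone `N_C(X_F)`, for `X_F` in the relative
interior of the face `F` (this normal cone does not depend on the choice of such `X_F`). -/
def aFplus (C F : Set E) : Set E :=
  ⋃ X ∈ intrinsicInterior ℝ F, intrinsicInterior ℝ (normCone C X)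


/-- The orthogonal projection onto a subspace `b`, viewed as a map `E → E`. -/
noncomputable def projOn (b : Submodule ℝ E) (x : E) : E :=
  (b.orthogonalProjection x : E)


/-! Two faces `F₁`, `F₂` whose cones `𝔞_F^+` project onto the same `ξ` are exposed by vectors
`λ₁`, `λ₂` with `λ₁ - λ₂ ∈ 𝔟`. If `H₁ ∈ F₁` and `H₂ ∈ F₂` have the same projection to `𝔟`,
then `H₁ - H₂ ∈ 𝔟⊥`, so `(λ₁, H₁ - H₂) = (λ₂, H₁ - H₂)`. Maximality of `H₁` for `λ₁` makes this
nonnegative and maximality of `H₂` for `λ₂` makes it nonpositive; hence `H₁` also maximizes `λ₂`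
on `C`, i.e. `H₁ ∈ F₁ ∩ F₂`. -/

lemma exists_pos_smul_sub_add_mem_of_mem_intrinsicInterior {V : Type*} [AddCommGroup V]
    [Module ℝ V] [TopologicalSpace V] [IsTopologicalAddGroup V] [ContinuousSMul ℝ V]
    {S : Set V} {x y : V} (hx : x ∈ intrinsicInterior ℝ S) (hy : y ∈ S) :
    ∃ ε : ℝ, 0 < ε ∧ ε • (x - y) + x ∈ S := by
  obtain ⟨x', hx', rfl⟩ := hx
  have hmem (ε : ℝ) : ε • ((x' : V) - y) + x' ∈ affineSpan ℝ S := by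
    simpa [vsub_eq_sub, vadd_eq_add] using (affineSpan ℝ S).smul_vsub_vadd_mem ε x'.2
      (subset_affineSpan ℝ S hy) x'.2
  let f : ℝ → affineSpan ℝ S := fun ε => ⟨ε • ((x' : V) - y) + x', hmem ε⟩
  have hf : Continuous f := by fun_prop
  have hf0 : f 0 = x' := Subtype.ext (by simp [f])
  have hnear : ∀ᶠ ε in nhds 0, f ε ∈ interior ((↑) ⁻¹' S) :=
    hf.continuousAt.preimage_mem_nhds (hf0 ▸ isOpen_interior.mem_nhds hx')
  obtain ⟨ε, hε, hεS⟩ := ((hnear.filter_mono nhdsWithin_le_nhds).and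
    (self_mem_nhdsWithin (s := Set.Ioi 0))).exists
  have hεS' : f ε ∈ (↑) ⁻¹' S := interior_subset hε
  exact ⟨ε, hεS, hεS'⟩

section InnerProductSpace

variable {V : Type*} [NormedAddCommGroup V] [InnerProductSpace ℝ V]

lemma mem_normCone_iff {C : Set V} {X Y : V} :
    Y ∈ normCone C X ↔ ∀ c ∈ C, (inner ℝ Y c : ℝ) ≤ inner ℝ Y X := by
  constructor
  · intro hY c hc
    have := hY (c - X) ⟨1, zero_le_one, c, hc, by simp⟩
    rw [inner_sub_right] at this
    linarith
  · rintro hY _ ⟨t, ht, c, hc, rfl⟩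
    rw [inner_smul_right, inner_sub_right]
    exact mul_nonpos_of_nonneg_of_nonpos ht (by linarith [hY c hc])

lemma IsFace.subset {C F : Set V} (hF : IsFace C F) : F ⊆ C := by
  obtain ⟨-, -, -, -, rfl⟩ := hF
  exact fun _ hH => hH.1

lemma IsFace.mem_normCone_of_mem {C F : Set V} (hF : IsFace C F) {X lam H : V}
    (hX : X ∈ intrinsicInterior ℝ F) (hlam : lam ∈ normCone C X) (hH : H ∈ F) :
    lam ∈ normCone C H := by
  have hmax := mem_normCone_iff.1 hlam
  -- pushing `X` slightly beyond itself, away from `H`, stays in `F`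
  obtain ⟨ε, hε, hεF⟩ := exists_pos_smul_sub_add_mem_of_mem_intrinsicInterior hX hH
  have hbeyond := hmax _ (hF.subset hεF)
  rw [inner_add_right, inner_smul_right, inner_sub_right] at hbeyond
  have hXH : (inner ℝ lam X : ℝ) ≤ inner ℝ lam H := by nlinarith
  exact mem_normCone_iff.2 fun c hc => (hmax c hc).trans hXH

lemma IsFace.mem_of_mem_normCone {C F : Set V} (hF : IsFace C F) {X lam H : V}
    (hX : X ∈ F) (hlam : lam ∈ intrinsicInterior ℝ (normCone C X)) (hHC : H ∈ C)
    (hH : lam ∈ normCone C H) : H ∈ F := by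
  obtain ⟨-, μ, c, hμ, rfl⟩ := hF
  have hμX : μ ∈ normCone C X := mem_normCone_iff.2 fun H' hH' => hX.2 ▸ hμ H' hH'
  have hlamXH : (inner ℝ lam X : ℝ) = inner ℝ lam H :=
    le_antisymm (mem_normCone_iff.1 hH X hX.1)
      (mem_normCone_iff.1 (intrinsicInterior_subset hlam) H hHC)
  -- pushing `lam` slightly beyond itself, away from the face normal `μ`, stays in the normal cone
  obtain ⟨ε, hε, hεN⟩ := exists_pos_smul_sub_add_mem_of_mem_intrinsicInterior hlam hμX
  have hbeyond := mem_normCone_iff.1 hεN H hHC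
  simp only [inner_add_left, inner_smul_left, inner_sub_left, RCLike.conj_to_real] at hbeyond
  refine ⟨hHC, le_antisymm (hμ H hHC) ?_⟩
  rw [← hX.2]
  nlinarith

lemma IsFace.eq_setOf_mem_normCone {C F : Set V} (hF : IsFace C F) {lam : V}
    (hlam : lam ∈ aFplus C F) : F = {H | H ∈ C ∧ lam ∈ normCone C H} := by
  simp only [aFplus, Set.mem_iUnion] at hlam
  obtain ⟨X, hX, hlamX⟩ := hlam
  ext H
  exact ⟨fun hH => ⟨hF.subset hH, hF.mem_normCone_of_mem hX (intrinsicInterior_subset hlamX) hH⟩,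
    fun hH => hF.mem_of_mem_normCone (intrinsicInterior_subset hX) hlamX hH.1 hH.2⟩

end InnerProductSpace

lemma sub_mem_orthogonal_of_projOn_eq {K : Submodule ℝ E} {x y : E}
    (h : projOn K x = projOn K y) : x - y ∈ Kᗮ := by
  rw [← Submodule.orthogonalProjectionOnto_eq_zero_iff, map_sub, sub_eq_zero]
  exact Subtype.ext (by unfold projOn at h; exact h)

lemma inner_sub_sub_eq_zero_of_projOn_eq {b : Submodule ℝ E} {lam₁ lam₂ H₁ H₂ : E}
    (hlam : projOn bᗮ lam₁ = projOn bᗮ lam₂) (hH : projOn b H₁ = projOn b H₂) :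
    (inner ℝ (lam₁ - lam₂) (H₁ - H₂) : ℝ) = 0 :=
  Submodule.inner_left_of_mem_orthogonal (sub_mem_orthogonal_of_projOn_eq hH)
    (sub_mem_orthogonal_of_projOn_eq hlam)

lemma mem_normCone_of_projOn_eq {C : Set E} {b : Submodule ℝ E} {lam₁ lam₂ H₁ H₂ : E}
    (hH₂ : H₂ ∈ C) (hlam₁ : lam₁ ∈ normCone C H₁) (hlam₂ : lam₂ ∈ normCone C H₂)
    (hlam : projOn bᗮ lam₁ = projOn bᗮ lam₂) (hH : projOn b H₁ = projOn b H₂) :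
    lam₂ ∈ normCone C H₁ := by
  have horth := inner_sub_sub_eq_zero_of_projOn_eq hlam hH
  have h₁ := mem_normCone_iff.1 hlam₁ H₂ hH₂
  have h₂ := mem_normCone_iff.1 hlam₂
  simp only [inner_sub_left, inner_sub_right] at horth
  exact mem_normCone_iff.2 fun c hc => by linarith [h₂ c hc]

theorem stmt_8_general (C : Set E)
    (b : Submodule ℝ E)
    (ξ : E)
    (F₁ F₂ : Set E)
    (hF₁ : IsFace C F₁ ∧ ξ ∈ projOn bᗮ '' aFplus C F₁)
    (hF₂ : IsFace C F₂ ∧ ξ ∈ projOn bᗮ '' aFplus C F₂) :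
    projOn b '' F₁ ∩ projOn b '' F₂ = projOn b '' (F₁ ∩ F₂) := by
  obtain ⟨hface₁, lam₁, hlam₁, hproj₁⟩ := hF₁
  obtain ⟨hface₂, lam₂, hlam₂, hproj₂⟩ := hF₂
  rw [hface₁.eq_setOf_mem_normCone hlam₁, hface₂.eq_setOf_mem_normCone hlam₂]
  refine (Set.image_inter_subset _ _ _).antisymm' ?_
  rintro _ ⟨⟨H₁, hH₁, rfl⟩, H₂, hH₂, hH⟩
  exact ⟨H₁, ⟨hH₁, hH₁.1, mem_normCone_of_projOn_eq hH₂.1 hH₁.2 hH₂.2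
    (hproj₁.trans hproj₂.symm) hH.symm⟩, rfl⟩

theorem stmt_8 (C : Set E) (hC : IsFGConvex C) (hne : C.Nonempty)
    (b : Submodule ℝ E)
    (hdim : Module.finrank ℝ
        (Submodule.span ℝ (polarCone (asympCone C) + (b : Set E))) = Module.finrank ℝ E)
    (ξ : E) (hξb : ξ ∈ bᗮ)
    (hξ : ξ ∈ projOn bᗮ '' polarCone (asympCone C))
    (hgen : ∀ F : Set E, IsFace C F →
      Module.finrank ℝ (Submodule.span ℝ (projOn bᗮ '' aFplus C F)) < Module.finrank ℝ bᗮ →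
      ξ ∉ projOn bᗮ '' aFplus C F)
    (F₁ F₂ : Set E)
    (hF₁ : IsFace C F₁ ∧ ξ ∈ projOn bᗮ '' aFplus C F₁)
    (hF₂ : IsFace C F₂ ∧ ξ ∈ projOn bᗮ '' aFplus C F₂) :
    projOn b '' F₁ ∩ projOn b '' F₂ = projOn b '' (F₁ ∩ F₂) :=
  stmt_8_general C b ξ F₁ F₂ hF₁ hF₂
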